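/- For symmetric positive definite matrices A (n×n), Φ (m×m), and W ∈ ℝ^{m×n}, we have (W A Wᵀ) (W A Wᵀ + Φ)⁻¹ = W (Wᵀ Φ⁻¹ W + A⁻¹)⁻¹ Wᵀ Φ⁻¹. -/
import Mathlib

open Matrix

/-- Identity between the data-space and weight-space forms of the
Gaussian posterior mean map:
`(W A Wᵀ)(W A Wᵀ + Φ)⁻¹ = W (Wᵀ Φ⁻¹ W + A⁻¹)⁻¹ Wᵀ Φ⁻¹`. -/
theorem posterior_mean_identity {n m : ℕ}
    (A : Matrix (Fin n) (Fin n) ℝ) (Φ : Matrix (Fin m) (Fin m) ℝ)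
    (W : Matrix (Fin m) (Fin n) ℝ)
    (hA : A.PosDef) (hΦ : Φ.PosDef) :
    (W * A * Wᵀ) * (W * A * Wᵀ + Φ)⁻¹
      = W * (Wᵀ * Φ⁻¹ * W + A⁻¹)⁻¹ * Wᵀ * Φ⁻¹ := by
  have hWAW : (W * A * Wᵀ).PosSemidef := by
    simpa using hA.posSemidef.mul_mul_conjTranspose_same W
  have hS : (W * A * Wᵀ + Φ).PosDef := Matrix.PosDef.posSemidef_add hWAW hΦ
  have hWΦW : (Wᵀ * Φ⁻¹ * W).PosSemidef := by
    simpa using hΦ.inv.posSemidef.conjTranspose_mul_mul_same W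
  have hB : (Wᵀ * Φ⁻¹ * W + A⁻¹).PosDef := Matrix.PosDef.posSemidef_add hWΦW hA.inv
  letI := hS.isUnit.invertible
  letI := hB.isUnit.invertible
  have key : (Wᵀ * Φ⁻¹ * W + A⁻¹) * (A * Wᵀ) = Wᵀ * Φ⁻¹ * (W * A * Wᵀ + Φ) := by
    have h1 : A⁻¹ * (A * Wᵀ) = Wᵀ := by
      rw [← Matrix.mul_assoc, Matrix.nonsing_inv_mul A hA.det_pos.ne'.isUnit, Matrix.one_mul]
    have h2 : Wᵀ * Φ⁻¹ * Φ = Wᵀ := by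
      rw [Matrix.mul_assoc, Matrix.nonsing_inv_mul Φ hΦ.det_pos.ne'.isUnit, Matrix.mul_one]
    rw [Matrix.add_mul, Matrix.mul_add, h1, h2]
    simp [Matrix.mul_assoc]
  rw [Matrix.mul_inv_eq_iff_eq_mul_of_invertible]
  rw [show W * (Wᵀ * Φ⁻¹ * W + A⁻¹)⁻¹ * Wᵀ * Φ⁻¹ * (W * A * Wᵀ + Φ)
      = W * ((Wᵀ * Φ⁻¹ * W + A⁻¹)⁻¹ * (Wᵀ * Φ⁻¹ * (W * A * Wᵀ + Φ))) by
    simp [Matrix.mul_assoc], ← key, Matrix.inv_mul_cancel_left_of_invertible,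
    Matrix.mul_assoc]
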